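/- arXiv:1607.04499 — 8 statements merged into one kernel-verified Lean document; each statement's English description precedes it below -/
import Mathlib

section
/- Let F be a field, let n and k be positive integers, and let K = 2k+1. For 1 ≤ i ≤ K let α_{K,i} ∈ F^n be the vector whose j-th entry (1 ≤ j ≤ n) is 1 if j ≡ i (mod K) and 0 otherwise. If A and B are n×n matrices over F that are both band matrices with band width k, and A·α_{K,i} = B·α_{K,i} for every i with 1 ≤ i ≤ K, then A = B. -/
/-!
Row `i` of a band matrix of width `k` only sees the columns `c` with `|i - c| ≤ k`, a window of
`2k + 1` consecutive indices, which meets each residue class mod `2k + 1` at most once. So if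
`|i - j| ≤ k`, the `i`-th entry of `A α`, for `α` the comb vector of the class of `j`, is `A i j`;
the entries with `|i - j| > k` vanish for both matrices anyway.
-/

theorem Fin.eq_of_mod_eq_of_abs_sub_le {n k : ℕ} {i j c : Fin n}
    (hmod : ((c : ℕ) + 1) % (2 * k + 1) = ((j : ℕ) + 1) % (2 * k + 1))
    (hic : |(i : ℤ) - c| ≤ k) (hij : |(i : ℤ) - j| ≤ k) : c = j := by
  have hcj : (c : ℕ) ≡ j [MOD 2 * k + 1] := Nat.ModEq.add_right_cancel' 1 hmod
  refine Fin.ext (hcj.eq_of_abs_lt ?_)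
  rw [abs_le] at hic hij
  rw [abs_lt]
  push_cast
  omega

namespace Matrix

variable {F : Type*} [Semiring F] {n k : ℕ}

def IsBand (k : ℕ) (A : Matrix (Fin n) (Fin n) F) : Prop :=
  ∀ i j : Fin n, (k : ℤ) < |(i : ℤ) - (j : ℤ)| → A i j = 0

/-- `combVector K r` is `α_{K,r}`; columns are `0`-indexed, hence the shift `j + 1`. -/
def combVector (K r : ℕ) : Fin n → F :=
  fun j => if ((j : ℕ) + 1) % K = r % K then 1 else 0

theorem combVector_congr {K r s : ℕ} (h : r % K = s % K) :
    (combVector K r : Fin n → F) = combVector K s := by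
  unfold combVector
  rw [h]

theorem IsBand.mulVec_apply {A : Matrix (Fin n) (Fin n) F} (hA : A.IsBand k)
    {v : Fin n → F} {i j : Fin n} (hv : ∀ c, c ≠ j → |(i : ℤ) - c| ≤ k → v c = 0) :
    (A *ᵥ v) i = A i j * v j := by
  refine Finset.sum_eq_single j (fun c _ hc => ?_) fun hj => absurd (Finset.mem_univ j) hj
  by_cases hic : |(i : ℤ) - c| ≤ k
  · exact mul_eq_zero_of_right _ (hv c hc hic)
  · exact mul_eq_zero_of_left (hA i c (not_le.mp hic)) _

theorem IsBand.mulVec_combVector_apply {A : Matrix (Fin n) (Fin n) F} (hA : A.IsBand k)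
    {i j : Fin n} (hij : |(i : ℤ) - j| ≤ k) :
    (A *ᵥ combVector (2 * k + 1) (j + 1)) i = A i j := by
  rw [hA.mulVec_apply (j := j), combVector, if_pos rfl, mul_one]
  intro c hc hic
  exact if_neg fun hmod => hc (Fin.eq_of_mod_eq_of_abs_sub_le hmod hic hij)

end Matrix

open Matrix in
theorem band_matrix_determined_by_comb_vectors_general
    {F : Type*} [Field F] (n k : ℕ)
    (A B : Matrix (Fin n) (Fin n) F)
    (hA : ∀ i j : Fin n, (k : ℤ) < |(i : ℤ) - (j : ℤ)| → A i j = 0)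
    (hB : ∀ i j : Fin n, (k : ℤ) < |(i : ℤ) - (j : ℤ)| → B i j = 0)
    (h : ∀ i : ℕ, 1 ≤ i → i ≤ 2 * k + 1 →
      A.mulVec (fun j : Fin n =>
          if ((j : ℕ) + 1) % (2 * k + 1) = i % (2 * k + 1) then (1 : F) else 0) =
      B.mulVec (fun j : Fin n =>
          if ((j : ℕ) + 1) % (2 * k + 1) = i % (2 * k + 1) then (1 : F) else 0)) :
    A = B := by
  ext i j
  by_cases hij : (k : ℤ) < |(i : ℤ) - (j : ℤ)|
  · rw [hA i j hij, hB i j hij]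
  have hcomb : A *ᵥ combVector (2 * k + 1) (j + 1) = B *ᵥ combVector (2 * k + 1) (j + 1) := by
    rw [← combVector_congr (Nat.mod_add_mod j (2 * k + 1) 1)]
    exact h (j % (2 * k + 1) + 1) (by omega) (Nat.mod_lt _ (by omega))
  have hi := congrFun hcomb i
  rwa [IsBand.mulVec_combVector_apply hA (not_lt.mp hij),
    IsBand.mulVec_combVector_apply hB (not_lt.mp hij)] at hi

/-- If two band matrices of band width `k` agree on the `2k+1`
"comb" test vectors `α_{K,i}`, then they are equal. -/
theorem band_matrix_determined_by_comb_vectors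
    {F : Type*} [Field F] (n k : ℕ) (hn : 0 < n) (hk : 0 < k)
    (A B : Matrix (Fin n) (Fin n) F)
    (hA : ∀ i j : Fin n, (k : ℤ) < |(i : ℤ) - (j : ℤ)| → A i j = 0)
    (hB : ∀ i j : Fin n, (k : ℤ) < |(i : ℤ) - (j : ℤ)| → B i j = 0)
    (h : ∀ i : ℕ, 1 ≤ i → i ≤ 2 * k + 1 →
      A.mulVec (fun j : Fin n =>
          if ((j : ℕ) + 1) % (2 * k + 1) = i % (2 * k + 1) then (1 : F) else 0) =
      B.mulVec (fun j : Fin n =>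
          if ((j : ℕ) + 1) % (2 * k + 1) = i % (2 * k + 1) then (1 : F) else 0)) :
    A = B :=
  band_matrix_determined_by_comb_vectors_general n k A B hA hB h
end

section
/- Let F be a field, let S be a nonempty finite subset of F, let n be a positive integer, and let A, B ∈ M_n(F) with A ≠ B. Then the number of vectors x ∈ S^n (i.e., vectors in F^n all of whose entries lie in S) satisfying A·x = B·x is at most |S|^(n−1). In particular, if the entries of x are chosen uniformly and independently from S, then A·x = B·x with probability at most 1/|S|. -/
/-!
Some row `c` of `A - B` is nonzero, say `c j ≠ 0`, and every solution satisfies `c ⬝ᵥ x = 0`.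
On that hyperplane the coordinate `x j` is determined by the others, so restricting a solution
to the coordinates `k ≠ j` is injective into `S ^ (n - 1)`.
-/

open Matrix

section

variable {ι F : Type*} [Fintype ι] [DecidableEq ι]

theorem eq_of_dotProduct_eq_of_eqOn_ne [Ring F] [NoZeroDivisors F] {c x y : ι → F} {j : ι}
    (hcj : c j ≠ 0) (hxy : c ⬝ᵥ x = c ⬝ᵥ y) (hoff : ∀ k, k ≠ j → x k = y k) : x = y := by
  have hsingle : x - y = Pi.single j (x j - y j) := by
    ext k
    by_cases hk : k = j
    · subst hk; simp
    · simp [hk, hoff k hk]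
  have hzero : c j * (x j - y j) = 0 := by
    rw [← dotProduct_single, ← hsingle, dotProduct_sub, hxy, sub_self]
  rw [← sub_eq_zero, hsingle, (mul_eq_zero.mp hzero).resolve_left hcj, Pi.single_zero]

theorem card_cube_inter_hyperplane_le [Ring F] [NoZeroDivisors F] (S : Finset F) {c : ι → F}
    (hc : c ≠ 0) (b : F) :
    Nat.card {x : ι → F | (∀ j, x j ∈ S) ∧ c ⬝ᵥ x = b} ≤ S.card ^ (Fintype.card ι - 1) := by
  obtain ⟨j, hcj⟩ := Function.ne_iff.mp hc
  let restrict (x : {x : ι → F | (∀ j, x j ∈ S) ∧ c ⬝ᵥ x = b}) : {k // k ≠ j} → S :=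
    fun k => ⟨x.1 k, x.2.1 k⟩
  have hrestrict : Function.Injective restrict := by
    rintro ⟨x, hxS, hx⟩ ⟨y, hyS, hy⟩ h
    refine Subtype.ext (eq_of_dotProduct_eq_of_eqOn_ne hcj (hx.trans hy.symm) fun k hk => ?_)
    exact congrArg Subtype.val (congrFun h ⟨k, hk⟩)
  calc _ ≤ Nat.card ({k // k ≠ j} → S) := Nat.card_le_card_of_injective _ hrestrict
    _ = S.card ^ (Fintype.card ι - 1) := by
      simp [Nat.card_eq_fintype_card, Fintype.card_subtype_compl]

end

theorem exists_row_sub_ne_zero {m n R : Type*} [AddGroup R] {A B : Matrix m n R} (h : A ≠ B) :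
    ∃ i, (A - B) i ≠ 0 := by
  by_contra! hrow
  exact h (sub_eq_zero.mp (funext hrow))

theorem frievalds_test_count_general
    {F : Type*} [Field F] (S : Finset F) (n : ℕ)
    (A B : Matrix (Fin n) (Fin n) F) (hAB : A ≠ B) :
    Nat.card {x : Fin n → F // (∀ j, x j ∈ S) ∧ A.mulVec x = B.mulVec x} ≤
      S.card ^ (n - 1) := by
  obtain ⟨i, hi⟩ := exists_row_sub_ne_zero hAB
  have hcube : {x : Fin n → F | ∀ j, x j ∈ S}.Finite := Set.Finite.pi' fun _ => S.finite_toSet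
  calc _ ≤ Nat.card {x : Fin n → F | (∀ j, x j ∈ S) ∧ (A - B) i ⬝ᵥ x = 0} := by
        refine Nat.card_mono (hcube.subset fun x hx => hx.1) fun x ⟨hxS, hx⟩ => ⟨hxS, ?_⟩
        change ((A - B) *ᵥ x) i = 0
        rw [sub_mulVec, hx, sub_self, Pi.zero_apply]
    _ ≤ S.card ^ (n - 1) := by
        simpa only [Fintype.card_fin] using card_cube_inter_hyperplane_le S hi 0

/-- If `A ≠ B`, then the number of vectors `x` with all entries in a
nonempty finite set `S` satisfying `A·x = B·x` is at most `|S|^(n-1)`. -/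
theorem frievalds_test_count
    {F : Type*} [Field F] (S : Finset F) (hS : S.Nonempty) (n : ℕ) (hn : 0 < n)
    (A B : Matrix (Fin n) (Fin n) F) (hAB : A ≠ B) :
    Nat.card {x : Fin n → F // (∀ j, x j ∈ S) ∧ A.mulVec x = B.mulVec x} ≤
      S.card ^ (n - 1) :=
  frievalds_test_count_general S n A B hAB
end

section
/- Let F be a finite field with q elements, let n and ℓ be positive integers, let A ∈ M_n(F) be invertible, let v ∈ F^n be a column vector, and let R ∈ F^(ℓ×n). Then either (i) the matrix A + v·u·R is invertible for every row vector u ∈ F^ℓ, or (ii) the number of row vectors u ∈ F^ℓ such that A + v·u·R is invertible is exactly (1 − q^(−1)) · q^ℓ. -/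
/-!
By the matrix determinant lemma, `A + v (uR)` is invertible iff `1 + (uR)·A⁻¹v ≠ 0`, i.e. iff
`u · c ≠ -1` with `c = R A⁻¹ v`. If `c = 0` this always holds. Otherwise `u ↦ u · c` is a
surjective linear functional on `F^ℓ`; its `q` fibres are translates of one another, so each
has `q^(ℓ-1)` elements and exactly `q^ℓ - q^(ℓ-1)` vectors avoid the value `-1`.
-/

open Matrix Finset

theorem Matrix.isUnit_add_vecMulVec_iff {m R : Type*} [Fintype m] [DecidableEq m] [CommRing R]
    {A : Matrix m m R} (hA : IsUnit A) (v w : m → R) :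
    IsUnit (A + vecMulVec v w) ↔ IsUnit (1 + w ⬝ᵥ (A⁻¹ *ᵥ v)) := by
  have hdet : IsUnit A.det := (isUnit_iff_isUnit_det A).mp hA
  rw [isUnit_iff_isUnit_det, vecMulVec_eq Unit, det_add_replicateCol_mul_replicateRow hdet,
    IsUnit.mul_iff, and_iff_right hdet, det_unique, Matrix.mul_assoc, ← replicateCol_mulVec]
  simp

theorem AddMonoidHom.card_eq_card_mul_card_fiber {G M : Type*} [AddGroup G] [Fintype G]
    [AddMonoid M] [Fintype M] [DecidableEq M] (f : G →+ M) (hf : Function.Surjective f) (m : M) :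
    Fintype.card G = Fintype.card M * #{g | f g = m} := by
  rw [← card_univ, card_eq_sum_card_fiberwise (f := f) (t := univ) (fun _ _ ↦ mem_univ _),
    ← smul_eq_mul, ← card_univ (α := M), ← sum_const]
  exact sum_congr rfl fun m' _ ↦ AddMonoidHom.card_fiber_eq_of_mem_range f (hf m') (hf m)

theorem Matrix.dotProduct_left_surjective {ι K : Type*} [Fintype ι] [DivisionRing K]
    {c : ι → K} (hc : c ≠ 0) : Function.Surjective (· ⬝ᵥ c) := by
  classical
  obtain ⟨i, hi⟩ := Function.ne_iff.mp hc
  exact fun a ↦ ⟨Pi.single i (a / c i), by simp [single_dotProduct, div_mul_cancel₀ _ hi]⟩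

theorem Matrix.card_dotProduct_ne {ι F : Type*} [Fintype ι] [Field F] [Fintype F]
    {c : ι → F} (hc : c ≠ 0) (a : F) :
    Nat.card {u : ι → F // u ⬝ᵥ c ≠ a} =
      (Fintype.card F - 1) * Fintype.card F ^ (Fintype.card ι - 1) := by
  classical
  set q := Fintype.card F
  have hι : 0 < Fintype.card ι := Fintype.card_pos_iff.mpr (Function.ne_iff.mp hc).nonempty
  have hq : q ^ Fintype.card ι = q * q ^ (Fintype.card ι - 1) := by
    rw [← pow_succ', Nat.sub_add_cancel hι]
  have hfiber : Fintype.card {u : ι → F // u ⬝ᵥ c = a} = q ^ (Fintype.card ι - 1) := by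
    have := (AddMonoidHom.mk' (· ⬝ᵥ c) (add_dotProduct · · c)).card_eq_card_mul_card_fiber
      (dotProduct_left_surjective hc) a
    rw [Fintype.card_fun, hq] at this
    rw [Fintype.card_subtype]
    exact (Nat.eq_of_mul_eq_mul_left Fintype.card_pos this).symm
  rw [Nat.card_eq_fintype_card, Fintype.card_subtype_compl, hfiber, Fintype.card_fun, hq,
    Nat.sub_one_mul]

theorem rank_one_update_nonsingular_dichotomy_general
    {F : Type*} [Field F] [Fintype F] (n ℓ q : ℕ)
    (hq : q = Fintype.card F)
    (A : Matrix (Fin n) (Fin n) F) (hA : IsUnit A)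
    (v : Fin n → F) (R : Matrix (Fin ℓ) (Fin n) F) :
    (∀ u : Fin ℓ → F, IsUnit (A + Matrix.vecMulVec v (Matrix.vecMul u R))) ∨
    Nat.card {u : Fin ℓ → F //
        IsUnit (A + Matrix.vecMulVec v (Matrix.vecMul u R))} =
      (q - 1) * q ^ (ℓ - 1) := by
  set c := R *ᵥ (A⁻¹ *ᵥ v)
  have hunit : ∀ u : Fin ℓ → F, IsUnit (A + vecMulVec v (u ᵥ* R)) ↔ u ⬝ᵥ c ≠ -1 := fun u ↦ by
    rw [isUnit_add_vecMulVec_iff hA, ← dotProduct_mulVec, isUnit_iff_ne_zero, Ne, Ne,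
      add_eq_zero_iff_neg_eq, eq_comm]
  by_cases hc : c = 0
  · exact .inl fun u ↦ by simp [hunit, hc]
  · right
    rw [Nat.card_congr (Equiv.subtypeEquivRight hunit), card_dotProduct_ne hc, Fintype.card_fin, hq]

/-- for an invertible matrix `A`, a column vector `v` and a matrix
`R ∈ F^(ℓ×n)`, either `A + v·u·R` is invertible for every row vector `u ∈ F^ℓ`,
or the number of row vectors `u` making it invertible is exactly
`(1 - q⁻¹) q^ℓ = (q-1) q^(ℓ-1)`. -/
theorem rank_one_update_nonsingular_dichotomy
    {F : Type*} [Field F] [Fintype F] (n ℓ q : ℕ) (hn : 0 < n) (hℓ : 0 < ℓ)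
    (hq : q = Fintype.card F)
    (A : Matrix (Fin n) (Fin n) F) (hA : IsUnit A)
    (v : Fin n → F) (R : Matrix (Fin ℓ) (Fin n) F) :
    (∀ u : Fin ℓ → F, IsUnit (A + Matrix.vecMulVec v (Matrix.vecMul u R))) ∨
    Nat.card {u : Fin ℓ → F //
        IsUnit (A + Matrix.vecMulVec v (Matrix.vecMul u R))} =
      (q - 1) * q ^ (ℓ - 1) :=
  rank_one_update_nonsingular_dichotomy_general n ℓ q hq A hA v R
end

section
/- Let F be a finite field with q elements, let n, k, ℓ be positive integers, let A ∈ M_n(F) be invertible, let V ∈ F^(n×k), and let R ∈ F^(ℓ×n). Then the number of matrices U ∈ F^(k×ℓ) such that A + V·U·R is invertible is at least (1 − q^(−1)) · q^(kℓ) if k = 1, and at least (1 − (q+1)/q²) · q^(kℓ) if k ≥ 2. -/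
/-!
With `B = R A⁻¹ V`, the matrix determinant lemma and the Weinstein–Aronszajn identity
`det (1 + X Y) = det (1 + Y X)` give `det (A + V U R) = det A · det (1 + U B)`. Factor `B = C D`
through `F^r`, `r = rank B`, with `C` left- and `D` right-invertible. Then
`det (1 + U C D) = det (1 + D U C)`, and `U ↦ D U C` is a surjective additive map onto the
`r × r` matrices, all of whose fibres have the same size. So the proportion of good `U` is
`|GL_r(F)| / q^(r²) = ∏_{i=1}^r (1 - q⁻ⁱ)`, which is at least `1 - q⁻¹ - q⁻²` for every `r`, and
at least `1 - q⁻¹` when `r ≤ k = 1`.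
-/

open Finset Matrix

@[to_additive]
theorem MonoidHom.card_subtype_comp_of_surjective {M N : Type*} [Group M] [Group N]
    (f : M →* N) (hf : Function.Surjective f) (P : N → Prop) :
    Nat.card {x // P (f x)} = Nat.card {y // P y} * Nat.card f.ker := by
  let s := Function.surjInv hf
  have hs : ∀ y, f (s y) = y := Function.surjInv_eq hf
  have hsec : ∀ p : {y // P y} × f.ker, f (s p.1 * p.2) = p.1 := fun p => by
    rw [map_mul, hs, f.mem_ker.mp p.2.2, mul_one]
  rw [← Nat.card_prod]
  refine Nat.card_congr
    { toFun := fun x => (⟨f x, x.2⟩, ⟨(s (f x))⁻¹ * x, by simp [hs]⟩)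
      invFun := fun p => ⟨s p.1 * p.2, by simpa only [hsec] using p.1.2⟩
      left_inv := fun x => by simp
      right_inv := fun p => by ext <;> simp [hsec] }

theorem Nat.card_isUnit_one_add (R : Type*) [Ring R] :
    Nat.card {x : R // IsUnit (1 + x)} = Nat.card Rˣ := by
  rw [← Nat.card_range_of_injective Units.val_injective]
  exact Nat.card_congr (Equiv.subtypeEquiv (Equiv.addLeft 1) fun _ => Iff.rfl)

theorem Matrix.exists_rank_factorization {K m n : Type*} [Field K] [Fintype m] [Fintype n]
    [DecidableEq m] [DecidableEq n] (B : Matrix m n K) :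
    ∃ (C : Matrix m (Fin B.rank) K) (D : Matrix (Fin B.rank) n K), B = C * D ∧
      (∃ C' : Matrix (Fin B.rank) m K, C' * C = 1) ∧
      ∃ D' : Matrix n (Fin B.rank) K, D * D' = 1 := by
  let e : LinearMap.range B.mulVecLin ≃ₗ[K] (Fin B.rank → K) := (Module.finBasis K _).equivFun
  let c := (LinearMap.range B.mulVecLin).subtype ∘ₗ e.symm.toLinearMap
  let d := e.toLinearMap ∘ₗ B.mulVecLin.rangeRestrict
  obtain ⟨c', hc'⟩ := c.exists_leftInverse_of_injective <|
    LinearMap.ker_eq_bot.mpr (Subtype.val_injective.comp e.symm.injective)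
  obtain ⟨d', hd'⟩ := d.exists_rightInverse_of_surjective <|
    LinearMap.range_eq_top.mpr (e.surjective.comp B.mulVecLin.surjective_rangeRestrict)
  refine ⟨c.toMatrix', d.toMatrix', ?_, ⟨c'.toMatrix', ?_⟩, d'.toMatrix', ?_⟩
  · have hcd : c ∘ₗ d = Matrix.toLin' B := by ext; simp [c, d]
    rw [← LinearMap.toMatrix'_comp, hcd, LinearMap.toMatrix'_toLin']
  · rw [← LinearMap.toMatrix'_comp, hc', LinearMap.toMatrix'_id]
  · rw [← LinearMap.toMatrix'_comp, hd', LinearMap.toMatrix'_id]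

theorem Matrix.isUnit_add_mul_mul_iff {α n m o : Type*} [CommRing α] [Fintype n] [Fintype m]
    [Fintype o] [DecidableEq n] [DecidableEq m] {A : Matrix n n α} (hA : IsUnit A)
    (V : Matrix n m α) (U : Matrix m o α) (R : Matrix o n α) :
    IsUnit (A + V * U * R) ↔ IsUnit (1 + U * (R * A⁻¹ * V)) := by
  rw [isUnit_iff_isUnit_det] at hA
  rw [isUnit_iff_isUnit_det, isUnit_iff_isUnit_det, Matrix.mul_assoc V, det_add_mul _ _ hA,
    IsUnit.mul_iff, and_iff_right hA]
  simp only [Matrix.mul_assoc]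

section

variable {α : Type*} [CommRing α] [LinearOrder α] [IsStrictOrderedRing α] {x : α}

-- The extra term `x ^ (r + 2)` is what makes the induction go through.
theorem sub_sub_sq_add_pow_le_prod_range_succ_one_sub_pow (hx0 : 0 ≤ x) (hx1 : x ≤ 1) (r : ℕ) :
    1 - x - x ^ 2 + x ^ (r + 2) ≤ ∏ i ∈ range (r + 1), (1 - x ^ (i + 1)) := by
  induction r with
  | zero => simp
  | succ r ih =>
    rw [prod_range_succ]
    set y := x ^ (r + 2)
    have hy0 : 0 ≤ y := pow_nonneg hx0 _
    have hyx : y ≤ x ^ 2 := pow_le_pow_of_le_one hx0 hx1 (by omega)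
    have hy1 : y ≤ 1 := pow_le_one₀ hx0 hx1
    have hxy : x ^ (r + 1 + 2) = y * x := pow_succ x (r + 2)
    rw [hxy]
    nlinarith [mul_le_mul_of_nonneg_right ih (sub_nonneg.mpr hy1),
      mul_nonneg hy0 (sub_nonneg.mpr hyx)]

theorem one_sub_sub_sq_le_prod_range_one_sub_pow (hx0 : 0 ≤ x) (hx1 : x ≤ 1) (r : ℕ) :
    1 - x - x ^ 2 ≤ ∏ i ∈ range r, (1 - x ^ (i + 1)) := by
  cases r with
  | zero => rw [prod_range_zero]; linarith [sq_nonneg x]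
  | succ r =>
    linarith [sub_sub_sq_add_pow_le_prod_range_succ_one_sub_pow hx0 hx1 r, pow_nonneg hx0 (r + 2)]

theorem one_sub_le_prod_range_one_sub_pow {r : ℕ} (hr : r ≤ 1) (hx0 : 0 ≤ x) :
    1 - x ≤ ∏ i ∈ range r, (1 - x ^ (i + 1)) := by
  interval_cases r <;> simp [hx0]

end

theorem Matrix.card_GL_field_eq_mul_prod (F : Type*) [Field F] [Fintype F] (r : ℕ) :
    (Nat.card (GL (Fin r) F) : ℚ) =
      (Fintype.card F : ℚ) ^ (r * r) * ∏ i ∈ range r, (1 - (Fintype.card F : ℚ)⁻¹ ^ (i + 1)) := by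
  have hq0 : 0 < Fintype.card F := Fintype.card_pos
  rw [card_GL_field]
  generalize Fintype.card F = q at hq0 ⊢
  have hq : (q : ℚ) ≠ 0 := by positivity
  have hpow : (q : ℚ) ^ (r * r) = ∏ _i ∈ range r, (q : ℚ) ^ r := by
    rw [prod_const, card_range, ← pow_mul]
  rw [Nat.cast_prod, Fin.prod_univ_eq_prod_range (fun i => ((q ^ r - q ^ i : ℕ) : ℚ)),
    ← prod_range_reflect (fun i => 1 - (q : ℚ)⁻¹ ^ (i + 1)), hpow, ← prod_mul_distrib]
  refine prod_congr rfl fun i hi => ?_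
  have hir : i ≤ r := (mem_range.mp hi).le
  rw [Nat.cast_sub (Nat.pow_le_pow_right hq0 hir), show r - 1 - i + 1 = r - i by
    have := mem_range.mp hi; omega, inv_pow, pow_sub₀ _ hq hir]
  push_cast
  field_simp

theorem Nat.card_matrix (m n α : Type*) [Fintype m] [Fintype n] :
    Nat.card (Matrix m n α) = Nat.card α ^ (Fintype.card m * Fintype.card n) := by
  rw [show Nat.card (Matrix m n α) = Nat.card (m → n → α) from rfl, Nat.card_fun, Nat.card_fun,
    Nat.card_eq_fintype_card (α := m), Nat.card_eq_fintype_card (α := n), ← pow_mul, mul_comm]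

section Count

variable {F m o : Type*} [Field F] [Fintype m] [Fintype o] [DecidableEq m]

theorem Matrix.card_isUnit_one_add_mul_mul_mul_card {p : Type*} [Fintype p] [DecidableEq p]
    {C : Matrix o p F} {D : Matrix p m F} {C' : Matrix p o F} {D' : Matrix m p F}
    (hC : C' * C = 1) (hD : D * D' = 1) :
    Nat.card {U : Matrix m o F // IsUnit (1 + U * (C * D))} * Nat.card (Matrix p p F) =
      Nat.card (GL p F) * Nat.card (Matrix m o F) := by
  let ψ : Matrix m o F →+ Matrix p p F :=
    AddMonoidHom.mk' (fun U => D * U * C) fun U U' => by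
      simp only [Matrix.mul_add, Matrix.add_mul]
  have hψ : Function.Surjective ψ := fun Z => ⟨D' * Z * C', by
    rw [AddMonoidHom.mk'_apply, Matrix.mul_assoc D', ← Matrix.mul_assoc D, hD, Matrix.one_mul,
      Matrix.mul_assoc Z, hC, Matrix.mul_one]⟩
  have key : ∀ U, IsUnit (1 + U * (C * D)) ↔ IsUnit (1 + ψ U) := fun U => by
    rw [isUnit_iff_isUnit_det, isUnit_iff_isUnit_det, ← Matrix.mul_assoc, det_one_add_mul_comm,
      ← Matrix.mul_assoc]
    rfl
  have hunits := ψ.card_subtype_comp_of_surjective hψ fun Z => IsUnit (1 + Z)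
  have htotal := ψ.card_subtype_comp_of_surjective hψ fun _ => True
  rw [Nat.card_congr (Equiv.subtypeUnivEquiv fun _ => trivial),
    Nat.card_congr (Equiv.subtypeUnivEquiv fun _ => trivial)] at htotal
  rw [Nat.card_congr (Equiv.subtypeEquivRight key), hunits, Nat.card_isUnit_one_add, htotal]
  ring

variable {n : Type*} [Fintype n] [DecidableEq n] {A : Matrix n n F}

theorem Matrix.card_isUnit_add_mul_mul_mul_card [DecidableEq o] (hA : IsUnit A)
    (V : Matrix n m F) (R : Matrix o n F) :
    Nat.card {U : Matrix m o F // IsUnit (A + V * U * R)} *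
        Nat.card (Matrix (Fin (R * A⁻¹ * V).rank) (Fin (R * A⁻¹ * V).rank) F) =
      Nat.card (GL (Fin (R * A⁻¹ * V).rank) F) * Nat.card (Matrix m o F) := by
  obtain ⟨C, D, hB, ⟨C', hC⟩, D', hD⟩ := (R * A⁻¹ * V).exists_rank_factorization
  have h := card_isUnit_one_add_mul_mul_mul_card (m := m) hC hD
  rw [← hB] at h
  rwa [Nat.card_congr (Equiv.subtypeEquivRight fun U => isUnit_add_mul_mul_iff hA V U R)]

theorem Matrix.card_isUnit_add_mul_mul_eq [Fintype F] [DecidableEq o] (hA : IsUnit A)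
    (V : Matrix n m F) (R : Matrix o n F) :
    (Nat.card {U : Matrix m o F // IsUnit (A + V * U * R)} : ℚ) =
      (Fintype.card F : ℚ) ^ (Fintype.card m * Fintype.card o) *
        ∏ i ∈ range (R * A⁻¹ * V).rank, (1 - (Fintype.card F : ℚ)⁻¹ ^ (i + 1)) := by
  have hcount := congrArg (Nat.cast : ℕ → ℚ) (card_isUnit_add_mul_mul_mul_card hA V R)
  simp only [Nat.cast_mul, card_GL_field_eq_mul_prod, Nat.card_matrix,
    Nat.card_eq_fintype_card (α := F), Fintype.card_fin, Nat.cast_pow] at hcount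
  refine mul_right_cancel₀ (b := (Fintype.card F : ℚ) ^ ((R * A⁻¹ * V).rank * (R * A⁻¹ * V).rank))
    (by positivity) ?_
  linear_combination hcount

end Count

theorem additive_preconditioner_nonsingular_count_sandwiched_general
    {F : Type*} [Field F] [Fintype F] (n k ℓ : ℕ)
    (q : ℚ) (hq : q = (Fintype.card F : ℚ))
    (A : Matrix (Fin n) (Fin n) F) (hA : IsUnit A)
    (V : Matrix (Fin n) (Fin k) F) (R : Matrix (Fin ℓ) (Fin n) F) :
    (k = 1 → (1 - 1 / q) * q ^ (k * ℓ) ≤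
      (Nat.card {U : Matrix (Fin k) (Fin ℓ) F // IsUnit (A + V * U * R)} : ℚ)) ∧
    (2 ≤ k → (1 - (q + 1) / q ^ 2) * q ^ (k * ℓ) ≤
      (Nat.card {U : Matrix (Fin k) (Fin ℓ) F // IsUnit (A + V * U * R)} : ℚ)) := by
  have hq1 : 1 ≤ q := hq ▸ mod_cast Fintype.card_pos
  have hx0 : 0 ≤ q⁻¹ := by positivity
  have hx1 : q⁻¹ ≤ 1 := inv_le_one_of_one_le₀ hq1
  rw [card_isUnit_add_mul_mul_eq hA, Fintype.card_fin, Fintype.card_fin, ← hq]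
  refine ⟨fun hk => ?_, fun _ => ?_⟩
  · rw [mul_comm, one_div]
    exact mul_le_mul_of_nonneg_left
      (one_sub_le_prod_range_one_sub_pow ((rank_le_width _).trans hk.le) hx0) (by positivity)
  · have hε : (q + 1) / q ^ 2 = q⁻¹ + q⁻¹ ^ 2 := by field_simp
    rw [mul_comm, hε, ← sub_sub]
    exact mul_le_mul_of_nonneg_left (one_sub_sub_sq_le_prod_range_one_sub_pow hx0 hx1 _)
      (by positivity)

/-- for invertible `A`, fixed `V ∈ F^(n×k)` and `R ∈ F^(ℓ×n)`, the
number of matrices `U ∈ F^(k×ℓ)` with `A + V·U·R` invertible is at least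
`(1 - q⁻¹) q^(kℓ)` if `k = 1` and at least `(1 - (q+1)/q²) q^(kℓ)` if `k ≥ 2`. -/
theorem additive_preconditioner_nonsingular_count_sandwiched
    {F : Type*} [Field F] [Fintype F] (n k ℓ : ℕ) (hn : 0 < n) (hk : 0 < k) (hℓ : 0 < ℓ)
    (q : ℚ) (hq : q = (Fintype.card F : ℚ))
    (A : Matrix (Fin n) (Fin n) F) (hA : IsUnit A)
    (V : Matrix (Fin n) (Fin k) F) (R : Matrix (Fin ℓ) (Fin n) F) :
    (k = 1 → (1 - 1 / q) * q ^ (k * ℓ) ≤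
      (Nat.card {U : Matrix (Fin k) (Fin ℓ) F // IsUnit (A + V * U * R)} : ℚ)) ∧
    (2 ≤ k → (1 - (q + 1) / q ^ 2) * q ^ (k * ℓ) ≤
      (Nat.card {U : Matrix (Fin k) (Fin ℓ) F // IsUnit (A + V * U * R)} : ℚ)) :=
  additive_preconditioner_nonsingular_count_sandwiched_general n k ℓ q hq A hA V R
end

section
/- Let F be a finite field with q elements, let n be a positive integer, let A ∈ M_n(F), and let f ∈ F[z] be a monic irreducible polynomial of degree d that does not divide the minimal polynomial of A. Then the number of pairs (v, u) ∈ F^n × F^n such that f does not divide the minimal polynomial of A + v·uᵀ is at least (1 − q^(−d)) · q^(2n). -/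
/-!
Let `K = F[z]/(f)`, a field with `q ^ d` elements, and `α ∈ K` the class of `z`. Then `f` divides
the minimal polynomial of a matrix `B` iff `α` is a root of its characteristic polynomial, i.e.
iff `det (α - B) = 0` over `K`. As `α - A` is invertible, the matrix determinant lemma shows that
`f ∣ minpoly (A + v uᵀ)` iff `∑ i, u i • w i = 1`, where `w = (α - A)⁻¹ v ∈ Kⁿ`.

For fixed `v` the map `u ↦ ∑ i, u i • w i` is `F`-linear from `Fⁿ` to `K`. If `1` lies in its
image, that image is stable under multiplication by `α` (because `α w = v + A w`), hence is all
of `K`, and then the fibre over `1` has `q ^ n / q ^ d` elements. Summing over `v`, at most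
`q ^ (2n) / q ^ d` pairs `(v, u)` are bad.
-/

open Polynomial Matrix

theorem AddMonoidHom.card_fiber_mul_card_eq {G H : Type*} [AddGroup G] [AddGroup H] [Finite G]
    (f : G →+ H) (hf : Function.Surjective f) (c : H) :
    Nat.card {x // f x = c} * Nat.card H = Nat.card G := by
  obtain ⟨a, rfl⟩ := hf c
  rw [show Nat.card {x // f x = f a} = Nat.card f.ker from Nat.card_congr (f.fiberEquivKer a),
    ← f.ker.card_mul_index, AddSubgroup.index_ker f, f.range_eq_top.2 hf, AddSubgroup.card_top]

theorem Submodule.eq_top_of_one_mem_of_mul_mem {R A : Type*} [CommSemiring R] [Semiring A]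
    [Algebra R A] {α : A} (hα : Algebra.adjoin R {α} = ⊤) {S : Submodule R A} (h1 : 1 ∈ S)
    (hmul : ∀ x ∈ S, α * x ∈ S) : S = ⊤ := by
  suffices h : ∀ x ∈ Algebra.adjoin R {α}, ∀ s ∈ S, x * s ∈ S by
    refine eq_top_iff.2 fun x _ => ?_
    simpa using h x (hα ▸ Algebra.mem_top) 1 h1
  intro x hx
  induction hx using Algebra.adjoin_induction with
  | mem x hx => rw [Set.mem_singleton_iff.1 hx]; exact hmul
  | algebraMap r => intro s hs; rw [← Algebra.smul_def]; exact S.smul_mem r hs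
  | add x y _ _ hx hy => intro s hs; rw [add_mul]; exact S.add_mem (hx s hs) (hy s hs)
  | mul x y _ _ hx hy => intro s hs; rw [mul_assoc]; exact hx _ (hy s hs)

theorem Matrix.det_sub_vecMulVec {ι R : Type*} [Fintype ι] [DecidableEq ι] [CommRing R]
    {M : Matrix ι ι R} (hM : IsUnit M.det) (x y : ι → R) :
    (M - vecMulVec x y).det = M.det * (1 - y ⬝ᵥ (M⁻¹ *ᵥ x)) := by
  rw [sub_eq_add_neg, ← neg_vecMulVec, vecMulVec_eq Unit, det_add_replicateCol_mul_replicateRow hM,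
    det_unique (1 + _), add_apply, one_apply_eq, ← replicateRow_vecMul,
    replicateRow_mul_replicateCol_apply, ← dotProduct_mulVec, mulVec_neg, dotProduct_neg,
    ← sub_eq_add_neg]

theorem Matrix.aeval_charpoly_eq_det {F K ι : Type*} [CommRing F] [CommRing K] [Algebra F K]
    [Fintype ι] [DecidableEq ι] (B : Matrix ι ι F) (α : K) :
    aeval α B.charpoly = (scalar ι α - B.map (algebraMap F K)).det := by
  rw [aeval_def, ← eval_map, ← charpoly_map, charpoly, eval_det, matPolyEquiv_charmatrix,
    sub_eq_add_neg, ← map_neg, eval_add, eval_X, eval_C, ← sub_eq_add_neg]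

section LinearCombination

variable {F K ι : Type*} [CommRing F] [CommRing K] [Algebra F K] [Fintype ι] [DecidableEq ι]
  {α : K} {A : Matrix ι ι F} {v : ι → F} {w : ι → K}

theorem Matrix.span_range_eq_top_of_scalar_sub_mulVec_eq (hα : Algebra.adjoin F {α} = ⊤)
    (hw : (scalar ι α - A.map (algebraMap F K)) *ᵥ w = algebraMap F K ∘ v)
    (h1 : 1 ∈ Submodule.span F (Set.range w)) : Submodule.span F (Set.range w) = ⊤ := by
  have hαw : ∀ i, α * w i = v i • 1 + ∑ j, A i j • w j := by
    intro i
    have := congrFun hw i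
    rw [sub_mulVec, Pi.sub_apply, sub_eq_iff_eq_add, scalar_apply, mulVec_diagonal] at this
    simpa [Algebra.smul_def, mulVec, dotProduct] using this
  refine Submodule.eq_top_of_one_mem_of_mul_mem hα h1 fun x hx => ?_
  induction hx using Submodule.span_induction with
  | mem x hx =>
    obtain ⟨i, rfl⟩ := hx
    rw [hαw]
    exact add_mem (Submodule.smul_mem _ _ h1)
      (sum_mem fun j _ => Submodule.smul_mem _ _ (Submodule.subset_span ⟨j, rfl⟩))
  | zero => simp
  | add x y _ _ hx hy => rw [mul_add]; exact add_mem hx hy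
  | smul a x _ hx => rw [mul_smul_comm]; exact Submodule.smul_mem _ a hx

theorem Matrix.card_linearCombination_eq_one_mul_card_le [Finite F]
    (hα : Algebra.adjoin F {α} = ⊤)
    (hw : (scalar ι α - A.map (algebraMap F K)) *ᵥ w = algebraMap F K ∘ v) :
    Nat.card {u : ι → F // Fintype.linearCombination F w u = 1} * Nat.card K ≤
      Nat.card (ι → F) := by
  by_cases h : ∃ u, Fintype.linearCombination F w u = 1
  · have hsurj : Function.Surjective (Fintype.linearCombination F w) := by
      rw [← LinearMap.range_eq_top, Fintype.range_linearCombination]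
      refine span_range_eq_top_of_scalar_sub_mulVec_eq hα hw ?_
      rwa [← Fintype.range_linearCombination]
    exact ((Fintype.linearCombination F w).toAddMonoidHom.card_fiber_mul_card_eq hsurj 1).le
  · have : IsEmpty {u // Fintype.linearCombination F w u = 1} := ⟨fun u => h ⟨u.1, u.2⟩⟩
    simp

end LinearCombination

section Field

variable {F K ι : Type*} [Field F] [Field K] [Algebra F K] [Fintype ι] [DecidableEq ι]

theorem Matrix.aeval_minpoly_eq_zero_iff (B : Matrix ι ι F) (α : K) :
    aeval α (minpoly F B) = 0 ↔ aeval α B.charpoly = 0 := by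
  refine ⟨fun h => ?_, fun h => ?_⟩
  · obtain ⟨g, hg⟩ := minpoly_dvd_charpoly B
    rw [hg, map_mul, h, zero_mul]
  · set BK := B.map (algebraMap F K)
    rw [aeval_charpoly_eq_det, ← exists_mulVec_eq_zero_iff] at h
    obtain ⟨x, hx0, hx⟩ := h
    have hev : Module.End.HasEigenvector (toLin' BK) α x := by
      refine ⟨Module.End.mem_eigenspace_iff.2 ?_, hx0⟩
      rw [sub_mulVec, sub_eq_zero] at hx
      simpa [toLin'_apply, scalar_apply, mulVec_diagonal, funext_iff] using hx.symm
    have hBK : aeval (toLin' BK) ((minpoly F B).map (algebraMap F K)) = 0 := by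
      rw [show toLin' BK = toLinAlgEquiv' BK from rfl, aeval_algHom_apply, aeval_map_algebraMap,
        show BK = (Algebra.ofId F K).mapMatrix B from rfl, aeval_algHom_apply, minpoly.aeval,
        map_zero, map_zero]
    have := Module.End.aeval_apply_of_hasEigenvector (p := (minpoly F B).map (algebraMap F K)) hev
    rw [hBK, LinearMap.zero_apply, eq_comm, smul_eq_zero, eval_map, ← aeval_def] at this
    exact this.resolve_right hx0

theorem dvd_minpoly_iff_aeval_root_charpoly {f : F[X]} [Fact (Irreducible f)]
    (B : Matrix ι ι F) : f ∣ minpoly F B ↔ aeval (AdjoinRoot.root f) B.charpoly = 0 := by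
  rw [← AdjoinRoot.mk_eq_zero, ← AdjoinRoot.aeval_eq, aeval_minpoly_eq_zero_iff]

/-- The vector `(α - A)⁻¹ v` over `K`; it is `0` when `α` is an eigenvalue of `A`. -/
noncomputable def Matrix.resolventMulVec (α : K) (A : Matrix ι ι F) (v : ι → F) : ι → K :=
  (scalar ι α - A.map (algebraMap F K))⁻¹ *ᵥ (algebraMap F K ∘ v)

variable {α : K} {A : Matrix ι ι F}

theorem Matrix.scalar_sub_map_mulVec_resolventMulVec (hA : aeval α A.charpoly ≠ 0)
    (v : ι → F) :
    (scalar ι α - A.map (algebraMap F K)) *ᵥ resolventMulVec α A v = algebraMap F K ∘ v := by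
  rw [aeval_charpoly_eq_det] at hA
  rw [resolventMulVec, mulVec_mulVec, mul_nonsing_inv _ (isUnit_iff_ne_zero.2 hA), one_mulVec]

theorem Matrix.aeval_charpoly_add_vecMulVec (hA : aeval α A.charpoly ≠ 0) (v u : ι → F) :
    aeval α (A + vecMulVec v u).charpoly =
      aeval α A.charpoly * (1 - Fintype.linearCombination F (resolventMulVec α A v) u) := by
  have hmap : (A + vecMulVec v u).map (algebraMap F K) =
      A.map (algebraMap F K) + vecMulVec (algebraMap F K ∘ v) (algebraMap F K ∘ u) := by
    ext i j; simp [vecMulVec_apply]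
  rw [aeval_charpoly_eq_det] at hA ⊢
  rw [aeval_charpoly_eq_det, hmap, ← sub_sub, det_sub_vecMulVec (isUnit_iff_ne_zero.2 hA),
    Fintype.linearCombination_apply, resolventMulVec]
  simp [dotProduct, Algebra.smul_def]

theorem Matrix.dvd_minpoly_add_vecMulVec_iff {f : F[X]} [Fact (Irreducible f)]
    (hA : ¬ f ∣ minpoly F A) (v u : ι → F) :
    f ∣ minpoly F (A + vecMulVec v u) ↔
      Fintype.linearCombination F (resolventMulVec (AdjoinRoot.root f) A v) u = 1 := by
  rw [dvd_minpoly_iff_aeval_root_charpoly] at hA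
  rw [dvd_minpoly_iff_aeval_root_charpoly, aeval_charpoly_add_vecMulVec hA, mul_eq_zero,
    or_iff_right hA, sub_eq_zero, eq_comm]

theorem Matrix.card_dvd_minpoly_add_vecMulVec_mul_card_le [Fintype F] {f : F[X]}
    [Fact (Irreducible f)] (hA : ¬ f ∣ minpoly F A) :
    Nat.card {p : (ι → F) × (ι → F) // f ∣ minpoly F (A + vecMulVec p.1 p.2)} *
      Nat.card (AdjoinRoot f) ≤ Nat.card (ι → F) ^ 2 := by
  rw [Nat.card_congr ((Equiv.subtypeProdEquivSigmaSubtype _).trans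
    (Equiv.sigmaCongrRight fun v => Equiv.subtypeEquivRight
      (dvd_minpoly_add_vecMulVec_iff hA v))), Nat.card_sigma, Finset.sum_mul]
  have hA' := (dvd_minpoly_iff_aeval_root_charpoly A).not.1 hA
  calc _ ≤ ∑ _v : ι → F, Nat.card (ι → F) := Finset.sum_le_sum fun v _ =>
        card_linearCombination_eq_one_mul_card_le AdjoinRoot.adjoinRoot_eq_top
          (scalar_sub_map_mulVec_resolventMulVec hA' v)
    _ = Nat.card (ι → F) ^ 2 := by simp [sq]

end Field

theorem rank_one_update_minpoly_not_div_count_general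
    {F : Type*} [Field F] [Fintype F] (n d : ℕ)
    (q : ℚ) (hq : q = (Fintype.card F : ℚ))
    (A : Matrix (Fin n) (Fin n) F) (f : Polynomial F)
    (hirr : Irreducible f) (hdeg : f.natDegree = d)
    (hnd : ¬ (f ∣ minpoly F A)) :
    (1 - 1 / q ^ d) * q ^ (2 * n) ≤
      (Nat.card {p : (Fin n → F) × (Fin n → F) //
        ¬ (f ∣ minpoly F (A + Matrix.vecMulVec p.1 p.2))} : ℚ) := by
  classical
  have : Fact (Irreducible f) := ⟨hirr⟩
  have := (AdjoinRoot.powerBasis hirr.ne_zero).finite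
  have hK : Nat.card (AdjoinRoot f) = Fintype.card F ^ d := by
    rw [Module.natCard_eq_pow_finrank (K := F), (AdjoinRoot.powerBasis hirr.ne_zero).finrank,
      AdjoinRoot.powerBasis_dim, hdeg, Nat.card_eq_fintype_card]
  have hV : Nat.card (Fin n → F) ^ 2 = Fintype.card F ^ (2 * n) := by simp [pow_mul']
  have hbad := card_dvd_minpoly_add_vecMulVec_mul_card_le hnd
  have hsplit := Nat.card_sum.symm.trans <| Nat.card_congr <| Equiv.sumCompl
    fun p : (Fin n → F) × (Fin n → F) => f ∣ minpoly F (A + vecMulVec p.1 p.2)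
  rw [hK, hV] at hbad
  rw [Nat.card_prod, ← sq, hV] at hsplit
  generalize Nat.card {p : (Fin n → F) × (Fin n → F) // f ∣ minpoly F (A + vecMulVec p.1 p.2)}
    = bad at hbad hsplit
  generalize Nat.card {p : (Fin n → F) × (Fin n → F) // ¬ f ∣ minpoly F (A + vecMulVec p.1 p.2)}
    = good at hsplit ⊢
  subst hq
  have hqd : (0 : ℚ) < Fintype.card F ^ d := pow_pos (mod_cast Fintype.card_pos) d
  have hbadQ : (bad : ℚ) ≤ Fintype.card F ^ (2 * n) / Fintype.card F ^ d := by
    rw [le_div_iff₀ hqd]; exact_mod_cast hbad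
  have hsplitQ : (bad + good : ℚ) = Fintype.card F ^ (2 * n) := by exact_mod_cast hsplit
  rw [sub_mul, one_div_mul_eq_div, one_mul]
  linarith

/-- if a monic irreducible `f` of degree `d` does not divide the
minimal polynomial of `A`, then the number of pairs `(v, u)` such that `f` does
not divide the minimal polynomial of `A + v·uᵀ` is at least `(1 - q^{-d}) q^{2n}`. -/
theorem rank_one_update_minpoly_not_div_count
    {F : Type*} [Field F] [Fintype F] (n d : ℕ) (hn : 0 < n)
    (q : ℚ) (hq : q = (Fintype.card F : ℚ))
    (A : Matrix (Fin n) (Fin n) F) (f : Polynomial F)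
    (hmonic : f.Monic) (hirr : Irreducible f) (hdeg : f.natDegree = d)
    (hnd : ¬ (f ∣ minpoly F A)) :
    (1 - 1 / q ^ d) * q ^ (2 * n) ≤
      (Nat.card {p : (Fin n → F) × (Fin n → F) //
        ¬ (f ∣ minpoly F (A + Matrix.vecMulVec p.1 p.2))} : ℚ) :=
  rank_one_update_minpoly_not_div_count_general n d q hq A f hirr hdeg hnd
end

section
/- Let F be a field, let n and k be positive integers, and let A, B ∈ M_n(F) with rank(B) ≤ k. If A has more than k nontrivial nilpotent blocks, i.e., rank(A) − rank(A²) ≥ k + 1, then z² divides the minimal polynomial of A + B. -/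
/-!
Write `C = A + B` and let `N` be the smallest `A`-invariant subspace containing `range B`.
It is also `C`-invariant, and `N ⊆ range B + A N` gives
`dim (ker A ∩ N) = dim N - dim A N ≤ rank B`.
If `z² ∤ μ_C`, then `z = a z² + b μ_C` for some polynomials `a, b`, so `C v` lies in every
`C`-invariant subspace containing `C² v`. Since `A ≡ C` modulo `N`, this forces `A v ∈ N`
whenever `A² v = 0`, i.e. `ker A ∩ range A ⊆ N`, whence
`rank A - rank A² = dim (ker A ∩ range A) ≤ rank B`.
-/

open Polynomial Module

namespace Polynomial

variable {K : Type*} [Field K]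

theorem X_mem_span_X_sq_of_not_X_sq_dvd {p : K[X]} (h : ¬ X ^ 2 ∣ p) :
    X ∈ Ideal.span {X ^ 2, p} := by
  rw [Ideal.mem_span_pair]
  by_cases hX : X ∣ p
  · obtain ⟨r, rfl⟩ := hX
    have hr : ¬ X ∣ r := fun ⟨s, hs⟩ => h ⟨s, by rw [hs, sq, mul_assoc]⟩
    obtain ⟨a, b, hab⟩ := irreducible_X.coprime_iff_not_dvd.mpr hr
    exact ⟨a, b, by linear_combination X * hab⟩
  · obtain ⟨a, b, hab⟩ := (irreducible_X.coprime_iff_not_dvd.mpr hX).pow_left (m := 2)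
    exact ⟨X * a, X * b, by linear_combination X * hab⟩

end Polynomial

theorem LinearMap.finrank_map_add_finrank_ker_inf {K V W : Type*} [Field K] [AddCommGroup V]
    [Module K V] [AddCommGroup W] [Module K W] [FiniteDimensional K V] (f : V →ₗ[K] W)
    (S : Submodule K V) :
    finrank K (S.map f) + finrank K ↥(LinearMap.ker f ⊓ S) = finrank K S := by
  rw [← LinearMap.range_domRestrict,
    ← (Submodule.comapSubtypeEquivOfLe (inf_le_right : LinearMap.ker f ⊓ S ≤ S)).finrank_eq,
    Submodule.comap_inf, Submodule.comap_subtype_self, inf_top_eq, ← LinearMap.ker_domRestrict]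
  exact LinearMap.finrank_range_add_finrank_ker _

namespace Module.End

section Semiring

variable {R M : Type*} [Semiring R] [AddCommMonoid M] [Module R M]

def invariantClosure (f : End R M) (N : Submodule R M) : Submodule R M :=
  ⨆ j : ℕ, N.map (f ^ j)

variable (f : End R M) (N : Submodule R M)

theorem le_invariantClosure : N ≤ f.invariantClosure N := by
  simpa [invariantClosure, one_eq_id] using le_iSup (fun j : ℕ => N.map (f ^ j)) 0

theorem _root_.Submodule.map_pow_succ (j : ℕ) : N.map (f ^ (j + 1)) = (N.map (f ^ j)).map f := by
  rw [← Submodule.map_comp, pow_succ', mul_eq_comp]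

theorem invariantClosure_le_comap :
    f.invariantClosure N ≤ (f.invariantClosure N).comap f := by
  rw [← Submodule.map_le_iff_le_comap, invariantClosure, Submodule.map_iSup]
  exact iSup_le fun j => (N.map_pow_succ f j).symm.le.trans
    (le_iSup (fun j : ℕ => N.map (f ^ j)) (j + 1))

theorem invariantClosure_le_sup_map :
    f.invariantClosure N ≤ N ⊔ (f.invariantClosure N).map f := by
  refine iSup_le fun j => ?_
  cases j with
  | zero => simp [one_eq_id]
  | succ j =>
    rw [Submodule.map_pow_succ]
    exact le_sup_of_le_right (Submodule.map_mono (le_iSup (fun j : ℕ => N.map (f ^ j)) j))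

end Semiring

section Field

variable {K V : Type*} [Field K] [AddCommGroup V] [Module K V]

theorem apply_mem_of_apply_apply_mem {g : End K V} (hg : ¬ X ^ 2 ∣ minpoly K g)
    {N : Submodule K V} (hN : N ≤ N.comap g) {v : V} (hv : g (g v) ∈ N) : g v ∈ N := by
  obtain ⟨a, b, hab⟩ := Ideal.mem_span_pair.mp (X_mem_span_X_sq_of_not_X_sq_dvd hg)
  have hga : g = aeval g a * g ^ 2 := by
    simpa [minpoly.aeval] using congrArg (aeval g) hab.symm
  rw [hga, mul_apply, sq, mul_apply]
  exact aeval_apply_smul_mem_of_le_comap hv a g hN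

theorem ker_inf_range_le_invariantClosure {f b : End K V}
    (h : ¬ X ^ 2 ∣ minpoly K (f + b)) :
    LinearMap.ker f ⊓ LinearMap.range f ≤ f.invariantClosure (LinearMap.range b) := by
  set N := f.invariantClosure (LinearMap.range b)
  have hb : ∀ v, b v ∈ N := fun v => le_invariantClosure f _ (LinearMap.mem_range_self b v)
  have hf : N ≤ N.comap f := invariantClosure_le_comap f _
  have hfb : N ≤ N.comap (f + b) := fun v hv => (add_mem (hf hv) (hb v) : f v + b v ∈ N)
  rintro _ ⟨hfu, u, rfl⟩
  have hc : (f + b) ((f + b) u) ∈ N := by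
    have : (f + b) ((f + b) u) = f (f u) + b (f u) + (f + b) (b u) := by
      simp only [LinearMap.add_apply, map_add]
    rw [this, LinearMap.mem_ker.mp hfu, zero_add]
    exact add_mem (hb _) (hfb (hb u))
  have hcu := apply_mem_of_apply_apply_mem h hfb hc
  simpa using sub_mem hcu (hb u)

variable [FiniteDimensional K V]

theorem finrank_range_mul_self_add_finrank_ker_inf_range (f : End K V) :
    finrank K (LinearMap.range (f * f)) + finrank K ↥(LinearMap.ker f ⊓ LinearMap.range f) =
      finrank K (LinearMap.range f) := by
  rw [mul_eq_comp, LinearMap.range_comp]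
  exact LinearMap.finrank_map_add_finrank_ker_inf f _

theorem finrank_ker_inf_invariantClosure_le (f : End K V) (N : Submodule K V) :
    finrank K ↥(LinearMap.ker f ⊓ f.invariantClosure N) ≤ finrank K N := by
  have hsum := LinearMap.finrank_map_add_finrank_ker_inf f (f.invariantClosure N)
  have hle := Submodule.finrank_mono (invariantClosure_le_sup_map f N)
  have hsup := Submodule.finrank_add_le_finrank_add_finrank N ((f.invariantClosure N).map f)
  omega

theorem finrank_range_le_finrank_range_mul_self_add {f b : End K V}
    (h : ¬ X ^ 2 ∣ minpoly K (f + b)) :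
    finrank K (LinearMap.range f) ≤
      finrank K (LinearMap.range (f * f)) + finrank K (LinearMap.range b) := by
  have hsum := finrank_range_mul_self_add_finrank_ker_inf_range f
  have hle := Submodule.finrank_mono (le_inf inf_le_left (ker_inf_range_le_invariantClosure h))
  have hclosure := finrank_ker_inf_invariantClosure_le f (LinearMap.range b)
  omega

end Field

end Module.End

theorem many_nilpotent_blocks_persist_general
    {F : Type*} [Field F] (n k : ℕ)
    (A B : Matrix (Fin n) (Fin n) F) (hB : B.rank ≤ k)
    (hA : k + 1 ≤ A.rank - (A * A).rank) :
    Polynomial.X ^ 2 ∣ minpoly F (A + B) := by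
  by_contra h
  let φ : Matrix (Fin n) (Fin n) F ≃ₐ[F] End F (Fin n → F) := Matrix.toLinAlgEquiv'
  have hφ : ¬ X ^ 2 ∣ minpoly F (φ A + φ B) := by rwa [← map_add, minpoly.algEquiv_eq]
  have hrank := End.finrank_range_le_finrank_range_mul_self_add hφ
  rw [← map_mul] at hrank
  change A.rank ≤ (A * A).rank + B.rank at hrank
  omega

/-- if `rank B ≤ k` and `A` has more than `k` nontrivial nilpotent
blocks (i.e. `rank A - rank A² ≥ k + 1`), then `z²` divides the minimal
polynomial of `A + B`. -/
theorem many_nilpotent_blocks_persist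
    {F : Type*} [Field F] (n k : ℕ) (hn : 0 < n) (hk : 0 < k)
    (A B : Matrix (Fin n) (Fin n) F) (hB : B.rank ≤ k)
    (hA : k + 1 ≤ A.rank - (A * A).rank) :
    Polynomial.X ^ 2 ∣ minpoly F (A + B) :=
  many_nilpotent_blocks_persist_general n k A B hB hA
end

section
/- Let F be a field, let n and k be positive integers, let A, B ∈ M_n(F) with rank(B) ≤ k, and let f ∈ F[z] be a monic irreducible polynomial of degree d. If more than k of the invariant factors of A are divisible by f, i.e., n − rank(f(A)) ≥ (k + 1)·d, then f divides the minimal polynomial of A + B. -/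
/-!
A perturbation of rank at most `k` moves `p(A)` by a matrix of rank at most `deg p · k`:
writing `p = q X + c` gives `p(A+B) - p(A) = (q(A+B) - q(A))(A+B) + q(A) B`, so each degree costs
at most `rank B`. Hence `rank f(A+B) ≤ rank f(A) + d k < n`, so `f(A+B)` is singular. An
irreducible `f` not dividing the minimal polynomial would be coprime to it, making `f(A+B)`
invertible.
-/

open Polynomial

namespace Matrix

variable {K : Type*} [Field K] {m n : Type*} [Fintype n]

theorem rank_add_le (A B : Matrix m n K) : (A + B).rank ≤ A.rank + B.rank := by
  rw [rank, rank, rank, mulVecLin_add]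
  have hle : LinearMap.range (A.mulVecLin + B.mulVecLin) ≤
      LinearMap.range A.mulVecLin ⊔ LinearMap.range B.mulVecLin := by
    rintro _ ⟨v, rfl⟩
    exact Submodule.add_mem_sup ⟨v, rfl⟩ ⟨v, rfl⟩
  exact (Submodule.finrank_mono hle).trans (Submodule.finrank_add_le_finrank_add_finrank _ _)

variable [DecidableEq n]

theorem rank_aeval_add_sub_aeval_le (A B : Matrix n n K) (p : K[X]) :
    (aeval (A + B) p - aeval A p).rank ≤ p.natDegree * B.rank := by
  induction hp : p.natDegree generalizing p with
  | zero => rw [eq_C_of_natDegree_eq_zero hp]; simp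
  | succ d ih =>
    set q := p.divX
    have hq : q.natDegree = d := by rw [natDegree_divX_eq_natDegree_tsub_one, hp]; rfl
    have hsplit : aeval (A + B) p - aeval A p =
        (aeval (A + B) q - aeval A q) * (A + B) + aeval A q * B := by
      conv_lhs => rw [← p.divX_mul_X_add]
      simp only [map_add, map_mul, aeval_X, aeval_C]
      noncomm_ring
    calc (aeval (A + B) p - aeval A p).rank
        ≤ ((aeval (A + B) q - aeval A q) * (A + B)).rank + (aeval A q * B).rank :=
          hsplit ▸ rank_add_le _ _
      _ ≤ (aeval (A + B) q - aeval A q).rank + B.rank :=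
          add_le_add (rank_mul_le_left _ _) (rank_mul_le_right _ _)
      _ ≤ (d + 1) * B.rank := by rw [add_one_mul]; gcongr; exact ih q hq

end Matrix

theorem isUnit_aeval_of_isCoprime_minpoly {R A : Type*} [CommRing R] [Ring A] [Algebra R A]
    {x : A} {p : R[X]} (h : IsCoprime p (minpoly R x)) : IsUnit (aeval x p) := by
  obtain ⟨a, b, hab⟩ := h
  have hinv : aeval x a * aeval x p = 1 := by simpa using congrArg (aeval x) hab
  exact ⟨⟨_, aeval x a, by rw [← map_mul, mul_comm, map_mul, hinv], hinv⟩, rfl⟩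

theorem Irreducible.dvd_minpoly_of_not_isUnit_aeval {K A : Type*} [Field K] [Ring A]
    [Algebra K A] {x : A} {f : K[X]} (hf : Irreducible f) (h : ¬IsUnit (aeval x f)) :
    f ∣ minpoly K x :=
  not_not.1 fun hndvd => h (isUnit_aeval_of_isCoprime_minpoly (hf.coprime_iff_not_dvd.2 hndvd))

theorem many_invariant_factors_persist_general
    {F : Type*} [Field F] (n k d : ℕ)
    (A B : Matrix (Fin n) (Fin n) F) (hB : B.rank ≤ k)
    (f : Polynomial F) (hirr : Irreducible f)
    (hdeg : f.natDegree = d)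
    (hA : (k + 1) * d ≤ n - (Polynomial.aeval A f).rank) :
    f ∣ minpoly F (A + B) := by
  have hd : 0 < d := hdeg ▸ hirr.natDegree_pos
  have hAn := (aeval A f).rank_le_width
  have hrank : (aeval (A + B) f).rank < n :=
    calc (aeval (A + B) f).rank
        ≤ (aeval A f).rank + (aeval (A + B) f - aeval A f).rank := by
          simpa using (aeval A f).rank_add_le (aeval (A + B) f - aeval A f)
      _ ≤ (aeval A f).rank + d * k := by
          grw [Matrix.rank_aeval_add_sub_aeval_le, hdeg, hB]
      _ < n := by rw [add_one_mul, mul_comm] at hA; omega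
  refine hirr.dvd_minpoly_of_not_isUnit_aeval fun hunit => hrank.ne ?_
  simpa using Matrix.rank_of_isUnit _ hunit

/-- if `rank B ≤ k` and more than `k` invariant factors of `A` are
divisible by a monic irreducible `f` of degree `d`
(i.e. `n - rank f(A) ≥ (k+1)·d`), then `f` divides the minimal polynomial of
`A + B`. -/
theorem many_invariant_factors_persist
    {F : Type*} [Field F] (n k d : ℕ) (hn : 0 < n) (hk : 0 < k)
    (A B : Matrix (Fin n) (Fin n) F) (hB : B.rank ≤ k)
    (f : Polynomial F) (hmonic : f.Monic) (hirr : Irreducible f)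
    (hdeg : f.natDegree = d)
    (hA : (k + 1) * d ≤ n - (Polynomial.aeval A f).rank) :
    f ∣ minpoly F (A + B) :=
  many_invariant_factors_persist_general n k d A B hB f hirr hdeg hA
end

section
/- Let F be a finite field with q elements, let n be a positive integer, and let B ∈ M_n(F) be a matrix whose minimal polynomial is divisible by z². Then the number of vectors c ∈ F^n for which the linear system B²·x = B·c has a solution x ∈ F^n is at most q^(n−1). In particular, if c is chosen uniformly at random from F^n, then the system B²·x = B·c is consistent with probability at most 1/q. -/
/-!
Write `minpoly B = z² g`. Then `g(B) B² = 0` but `g(B) B ≠ 0`, since otherwise the minimal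
polynomial would divide `z g`, which has smaller degree. If every `B c` lay in the range of `B²`,
then `g(B) B c ∈ g(B) B² (F^n) = 0` for all `c`, i.e. `g(B) B = 0`. Hence the consistent vectors
`c` form a proper subspace of `F^n`, which has at most `q^(n-1)` elements.
-/

open Polynomial

theorem aeval_mul_self_ne_zero_of_minpoly_eq_X_sq_mul {K A : Type*} [Field K] [Ring A]
    [Algebra K A] {a : A} (ha : IsIntegral K a) {g : K[X]} (hg : minpoly K a = X ^ 2 * g) :
    aeval a g * a ≠ 0 := by
  intro h0
  have hg0 : g ≠ 0 := by rintro rfl; exact minpoly.ne_zero ha (by simp [hg])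
  have hdvd : X ^ 2 * g ∣ g * X := hg ▸ minpoly.dvd K a (by rwa [aeval_mul, aeval_X])
  have := natDegree_le_of_dvd hdvd (mul_ne_zero hg0 X_ne_zero)
  rw [natDegree_mul (pow_ne_zero 2 X_ne_zero) hg0, natDegree_mul_X hg0, natDegree_X_pow] at this
  omega

theorem Module.End.comap_range_sq_ne_top_of_X_sq_dvd_minpoly {K V : Type*} [Field K]
    [AddCommGroup V] [Module K V] [FiniteDimensional K V] {f : Module.End K V}
    (h : X ^ 2 ∣ minpoly K f) : (LinearMap.range (f ^ 2)).comap f ≠ ⊤ := by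
  obtain ⟨g, hg⟩ := h
  have hsq : aeval f g * f ^ 2 = 0 := by
    simpa only [hg, mul_comm (X ^ 2), aeval_mul, aeval_X_pow] using minpoly.aeval K f
  intro htop
  refine aeval_mul_self_ne_zero_of_minpoly_eq_X_sq_mul (Algebra.IsIntegral.isIntegral f) hg ?_
  ext v
  obtain ⟨x, hx⟩ : f v ∈ LinearMap.range (f ^ 2) := Submodule.eq_top_iff'.mp htop v
  calc (aeval f g * f) v = (aeval f g * f ^ 2) x := by rw [Module.End.mul_apply, ← hx]; rfl
    _ = 0 := by rw [hsq]; rfl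

theorem Submodule.natCard_le_pow_finrank_sub_one {K V : Type*} [Field K] [Finite K]
    [AddCommGroup V] [Module K V] [FiniteDimensional K V] {S : Submodule K V} (hS : S ≠ ⊤) :
    Nat.card S ≤ Nat.card K ^ (Module.finrank K V - 1) := by
  rw [Module.natCard_eq_pow_finrank (K := K)]
  exact Nat.pow_le_pow_right Nat.card_pos (Nat.le_sub_one_of_lt (Submodule.finrank_lt hS))

theorem consistency_count_of_minpoly_div_sq_general
    {F : Type*} [Field F] [Fintype F] (n q : ℕ)
    (hq : q = Fintype.card F)
    (B : Matrix (Fin n) (Fin n) F)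
    (h : Polynomial.X ^ 2 ∣ minpoly F B) :
    Nat.card {c : Fin n → F // ∃ x : Fin n → F, (B ^ 2).mulVec x = B.mulVec c} ≤
      q ^ (n - 1) := by
  let f := Matrix.toLin' B
  have hS : (LinearMap.range (f ^ 2)).comap f ≠ ⊤ :=
    Module.End.comap_range_sq_ne_top_of_X_sq_dvd_minpoly (by rwa [Matrix.minpoly_toLin'])
  calc Nat.card {c : Fin n → F // ∃ x : Fin n → F, (B ^ 2).mulVec x = B.mulVec c}
      = Nat.card ((LinearMap.range (f ^ 2)).comap f) :=
        Nat.card_congr <| Equiv.subtypeEquivRight fun c => by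
          simp [f, ← Matrix.toLin'_pow, Matrix.toLin'_apply]
    _ ≤ q ^ (n - 1) := by
      simpa [hq, Nat.card_eq_fintype_card] using Submodule.natCard_le_pow_finrank_sub_one hS

/-- if `z²` divides the minimal polynomial of `B`, then the number of
vectors `c` for which `B²·x = B·c` is consistent is at most `q^(n-1)`. -/
theorem consistency_count_of_minpoly_div_sq
    {F : Type*} [Field F] [Fintype F] (n q : ℕ) (hn : 0 < n)
    (hq : q = Fintype.card F)
    (B : Matrix (Fin n) (Fin n) F)
    (h : Polynomial.X ^ 2 ∣ minpoly F B) :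
    Nat.card {c : Fin n → F // ∃ x : Fin n → F, (B ^ 2).mulVec x = B.mulVec c} ≤
      q ^ (n - 1) :=
  consistency_count_of_minpoly_div_sq_general n q hq B h
end
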